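/- arXiv:1602.03054 — 6 statements merged into one kernel-verified Lean document; each statement's English description precedes it below -/
import Mathlib

section
/- For every real θ₁ < θ₁⁻ one has d(θ₁) < 0, the two complex roots in θ₂ of γ(θ₁, θ₂) = 0 are the non-real complex conjugates x ± iy with x = −(σ₁₂θ₁ + μ₂)/σ₂₂ and y = √(−d(θ₁))/σ₂₂, and these satisfy the hyperbola equation σ₂₂(σ₁₂² − σ₁₁σ₂₂)x² + σ₁₂²σ₂₂y² − 2σ₂₂(σ₁₁μ₂ − σ₁₂μ₁)x = μ₂(σ₁₁μ₂ − 2σ₁₂μ₁). -/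
open Complex

/-- The kernel `γ(θ₁,θ₂)`. -/
noncomputable def gam (σ11 σ12 σ22 μ1 μ2 : ℝ) (θ1 θ2 : ℂ) : ℂ :=
  (1 / 2) * ((σ11 : ℂ) * θ1 ^ 2 + 2 * (σ12 : ℂ) * θ1 * θ2 + (σ22 : ℂ) * θ2 ^ 2) +
    (μ1 : ℂ) * θ1 + (μ2 : ℂ) * θ2

/-- For `θ₁ < θ₁⁻` one has `d(θ₁) < 0`; the two roots in `θ₂` of `γ(θ₁,·) = 0` are the
non-real complex conjugates `x ± iy` with `x = −(σ₁₂θ₁+μ₂)/σ₂₂`, `y = √(−d(θ₁))/σ₂₂`,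
and they satisfy the hyperbola equation. -/
theorem stmt1 (σ11 σ12 σ22 μ1 μ2 : ℝ)
    (h11 : 0 < σ11) (h22 : 0 < σ22) (hdet : 0 < σ11 * σ22 - σ12 ^ 2)
    (hμ1 : μ1 < 0) (hμ2 : μ2 < 0)
    (θ1m : ℝ)
    (hθ1m : θ1m = ((μ2 * σ12 - μ1 * σ22) -
      Real.sqrt ((μ2 * σ12 - μ1 * σ22) ^ 2 + μ2 ^ 2 * (σ11 * σ22 - σ12 ^ 2))) /
      (σ11 * σ22 - σ12 ^ 2)) :
    ∀ θ1 : ℝ, θ1 < θ1m → ∀ x y : ℝ,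
      x = -(σ12 * θ1 + μ2) / σ22 →
      y = Real.sqrt (-(θ1 ^ 2 * (σ12 ^ 2 - σ11 * σ22) + 2 * θ1 * (μ2 * σ12 - μ1 * σ22)
            + μ2 ^ 2)) / σ22 →
      (θ1 ^ 2 * (σ12 ^ 2 - σ11 * σ22) + 2 * θ1 * (μ2 * σ12 - μ1 * σ22) + μ2 ^ 2 < 0) ∧
      y ≠ 0 ∧
      (∀ z : ℂ, gam σ11 σ12 σ22 μ1 μ2 (θ1 : ℂ) z = 0 ↔
        z = (x : ℂ) + (y : ℂ) * Complex.I ∨ z = (x : ℂ) - (y : ℂ) * Complex.I) ∧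
      σ22 * (σ12 ^ 2 - σ11 * σ22) * x ^ 2 + σ12 ^ 2 * σ22 * y ^ 2
        - 2 * σ22 * (σ11 * μ2 - σ12 * μ1) * x = μ2 * (σ11 * μ2 - 2 * σ12 * μ1) := by
  intro θ1 hθ1 x y hx hy
  set D := σ11 * σ22 - σ12 ^ 2 with hD
  set B := μ2 * σ12 - μ1 * σ22 with hB
  set s := Real.sqrt (B ^ 2 + μ2 ^ 2 * D) with hs
  have hμ2sq : 0 < μ2 ^ 2 := by nlinarith
  have hs2 : s ^ 2 = B ^ 2 + μ2 ^ 2 * D := Real.sq_sqrt (by nlinarith [sq_nonneg B, mul_pos hμ2sq hdet])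
  have hspos : 0 < s := Real.sqrt_pos.mpr (by nlinarith [sq_nonneg B, mul_pos hμ2sq hdet])
  -- d(θ1) < 0
  have hd : θ1 ^ 2 * (σ12 ^ 2 - σ11 * σ22) + 2 * θ1 * B + μ2 ^ 2 < 0 := by
    have hθ : θ1 * D < B - s := by
      have h1 : θ1 < (B - s) / D := by rw [← hθ1m]; exact hθ1
      calc θ1 * D < ((B - s) / D) * D := by
            exact mul_lt_mul_of_pos_right h1 hdet
        _ = B - s := by field_simp
    have hθ2 : θ1 * D < B + s := lt_trans hθ (by linarith)
    have hpos : 0 < (B - s - θ1 * D) * (B + s - θ1 * D) :=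
      mul_pos (by linarith) (by linarith)
    have key : (θ1 ^ 2 * (σ12 ^ 2 - σ11 * σ22) + 2 * θ1 * B + μ2 ^ 2) * D
        = -((B - s - θ1 * D) * (B + s - θ1 * D)) := by
      linear_combination (-1 : ℝ) * hs2 + (θ1 ^ 2 * D) * hD
    nlinarith [key, hpos, hdet]
  have hdneg : 0 ≤ -(θ1 ^ 2 * (σ12 ^ 2 - σ11 * σ22) + 2 * θ1 * B + μ2 ^ 2) := by linarith
  have hypos : 0 < y := by
    rw [hy]
    exact div_pos (Real.sqrt_pos.mpr (by linarith)) h22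
  have hy2 : σ22 ^ 2 * y ^ 2 = -(θ1 ^ 2 * (σ12 ^ 2 - σ11 * σ22) + 2 * θ1 * B + μ2 ^ 2) := by
    rw [hy, div_pow, Real.sq_sqrt hdneg]
    field_simp
  have hx' : σ22 * x = -(σ12 * θ1 + μ2) := by
    rw [hx]; field_simp
  have hx2 : σ22 ^ 2 * x ^ 2 = (σ12 * θ1 + μ2) ^ 2 := by
    have : σ22 ^ 2 * x ^ 2 = (σ22 * x) ^ 2 := by ring
    rw [this, hx']; ring
  have hsum : σ22 * (x ^ 2 + y ^ 2) = σ11 * θ1 ^ 2 + 2 * μ1 * θ1 := by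
    have h2 : σ22 * (σ22 * (x ^ 2 + y ^ 2)) = σ22 * (σ11 * θ1 ^ 2 + 2 * μ1 * θ1) := by
      rw [hB] at hy2
      linear_combination hx2 + hy2
    exact mul_left_cancel₀ h22.ne' h2
  refine ⟨hd, ne_of_gt hypos, ?_, ?_⟩
  · intro z
    have hx'c : (σ22 : ℂ) * x = -((σ12 : ℂ) * θ1 + μ2) := by exact_mod_cast hx'
    have hsumc : (σ22 : ℂ) * ((x : ℂ) ^ 2 + (y : ℂ) ^ 2)
        = (σ11 : ℂ) * θ1 ^ 2 + 2 * μ1 * θ1 := by exact_mod_cast hsum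
    have hfac : gam σ11 σ12 σ22 μ1 μ2 (θ1 : ℂ) z
        = (σ22 : ℂ) / 2 * ((z - ((x : ℂ) + (y : ℂ) * Complex.I))
            * (z - ((x : ℂ) - (y : ℂ) * Complex.I))) := by
      unfold gam
      linear_combination z * hx'c + ((σ22 : ℂ) / 2 * (y : ℂ) ^ 2) * Complex.I_sq
        - (1 / 2) * hsumc
    have h22c : (σ22 : ℂ) / 2 ≠ 0 := by
      have : (σ22 : ℂ) ≠ 0 := by exact_mod_cast h22.ne'
      simpa using this
    rw [hfac]
    constructor
    · intro h
      rcases mul_eq_zero.mp h with h | h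
      · exact absurd h h22c
      · rcases mul_eq_zero.mp h with h | h
        · exact Or.inl (sub_eq_zero.mp h)
        · exact Or.inr (sub_eq_zero.mp h)
    · rintro (rfl | rfl) <;> ring
  · linear_combination (σ12 ^ 2) * hsum + (-σ11) * hx2
      + (-2 * (σ11 * μ2 - σ12 * μ1)) * hx'
end

section
/- For every complex s ≠ 0, γ(θ₁(s), θ₂(s)) = 0; that is, the pair of functions θ₁(s) = (θ₁⁺+θ₁⁻)/2 + ((θ₁⁺−θ₁⁻)/4)(s + 1/s), θ₂(s) = (θ₂⁺+θ₂⁻)/2 + ((θ₂⁺−θ₂⁻)/4)(s·e^{−iβ} + e^{iβ}/s) is a rational uniformization of the zero set of the kernel γ. -/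
set_option maxHeartbeats 1000000

lemma key (S11 S12 S22 M1 M2 a b c d e1 e2 s : ℂ) (hs : s ≠ 0)
    (h1 : S11 * a + S12 * c + M1 = 0)
    (h2 : S12 * a + S22 * c + M2 = 0)
    (hC1 : S11 * b ^ 2 + 2 * S12 * b * d * e2 + S22 * d ^ 2 * e2 ^ 2 = 0)
    (hC2 : S11 * b ^ 2 + 2 * S12 * b * d * e1 + S22 * d ^ 2 * e1 ^ 2 = 0)
    (h4 : S11 * (a ^ 2 + 2 * b ^ 2) + 2 * S12 * (a * c + b * d * (e1 + e2)) +
        S22 * (c ^ 2 + 2 * d ^ 2 * e1 * e2) + 2 * M1 * a + 2 * M2 * c = 0) :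
    (1 / 2) * (S11 * (a + b * (s + 1 / s)) ^ 2 +
        2 * S12 * (a + b * (s + 1 / s)) * (c + d * (s * e2 + e1 / s)) +
        S22 * (c + d * (s * e2 + e1 / s)) ^ 2) +
      M1 * (a + b * (s + 1 / s)) + M2 * (c + d * (s * e2 + e1 / s)) = 0 := by
  have hss : s * s⁻¹ = 1 := mul_inv_cancel₀ hs
  linear_combination (s ^ 2 / 2) * hC1 + ((1 / s) ^ 2 / 2) * hC2 + (b * (s + 1 / s)) * h1
    + (d * (s * e2 + e1 / s)) * h2 + (1 / 2) * h4
    + (S11 * b ^ 2 + S12 * b * d * (e1 + e2) + S22 * d ^ 2 * e1 * e2) * hss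

/-- The pair `(θ₁(s), θ₂(s))` is a rational uniformization of the zero set of the
kernel: `γ(θ₁(s), θ₂(s)) = 0` for every `s ≠ 0`. -/
theorem stmt3 (σ11 σ12 σ22 μ1 μ2 : ℝ)
    (h11 : 0 < σ11) (h22 : 0 < σ22) (hdet : 0 < σ11 * σ22 - σ12 ^ 2)
    (hμ1 : μ1 < 0) (hμ2 : μ2 < 0)
    (θ1p θ1m θ2p θ2m β : ℝ)
    (hθ1p : θ1p = ((μ2 * σ12 - μ1 * σ22) +
      Real.sqrt ((μ2 * σ12 - μ1 * σ22) ^ 2 + μ2 ^ 2 * (σ11 * σ22 - σ12 ^ 2))) /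
      (σ11 * σ22 - σ12 ^ 2))
    (hθ1m : θ1m = ((μ2 * σ12 - μ1 * σ22) -
      Real.sqrt ((μ2 * σ12 - μ1 * σ22) ^ 2 + μ2 ^ 2 * (σ11 * σ22 - σ12 ^ 2))) /
      (σ11 * σ22 - σ12 ^ 2))
    (hθ2p : θ2p = ((μ1 * σ12 - μ2 * σ11) +
      Real.sqrt ((μ1 * σ12 - μ2 * σ11) ^ 2 + μ1 ^ 2 * (σ11 * σ22 - σ12 ^ 2))) /
      (σ11 * σ22 - σ12 ^ 2))
    (hθ2m : θ2m = ((μ1 * σ12 - μ2 * σ11) -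
      Real.sqrt ((μ1 * σ12 - μ2 * σ11) ^ 2 + μ1 ^ 2 * (σ11 * σ22 - σ12 ^ 2))) /
      (σ11 * σ22 - σ12 ^ 2))
    (hβ : β = Real.arccos (-σ12 / Real.sqrt (σ11 * σ22))) :
    ∀ s : ℂ, s ≠ 0 →
      gam σ11 σ12 σ22 μ1 μ2
        (((θ1p : ℂ) + (θ1m : ℂ)) / 2 + ((θ1p : ℂ) - (θ1m : ℂ)) / 4 * (s + 1 / s))
        (((θ2p : ℂ) + (θ2m : ℂ)) / 2 + ((θ2p : ℂ) - (θ2m : ℂ)) / 4 *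
          (s * Complex.exp (-(β : ℂ) * Complex.I) +
            Complex.exp ((β : ℂ) * Complex.I) / s)) = 0 := by
  intro s hs
  have hD0 : σ11 * σ22 - σ12 ^ 2 ≠ 0 := ne_of_gt hdet
  set p1 := Real.sqrt σ11 with hp1def
  set p2 := Real.sqrt σ22 with hp2def
  set w := Real.sqrt (σ11 * σ22 - σ12 ^ 2) with hwdef
  set q := Real.sqrt (μ1 ^ 2 * σ22 - 2 * μ1 * μ2 * σ12 + μ2 ^ 2 * σ11) with hqdef
  have hQ0 : 0 ≤ μ1 ^ 2 * σ22 - 2 * μ1 * μ2 * σ12 + μ2 ^ 2 * σ11 := by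
    nlinarith [sq_nonneg (μ1 * σ12 - μ2 * σ11), sq_nonneg μ1, mul_pos h11 h11]
  have hp1 : p1 ^ 2 = σ11 := Real.sq_sqrt h11.le
  have hp2 : p2 ^ 2 = σ22 := Real.sq_sqrt h22.le
  have hw : w ^ 2 = σ11 * σ22 - σ12 ^ 2 := Real.sq_sqrt hdet.le
  have hq : q ^ 2 = μ1 ^ 2 * σ22 - 2 * μ1 * μ2 * σ12 + μ2 ^ 2 * σ11 := Real.sq_sqrt hQ0
  have hrr : Real.sqrt (σ11 * σ22) = p1 * p2 := Real.sqrt_mul h11.le σ22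
  have hr : 0 < Real.sqrt (σ11 * σ22) := Real.sqrt_pos.mpr (by positivity)
  have hsq : (Real.sqrt (σ11 * σ22)) ^ 2 = σ11 * σ22 := Real.sq_sqrt (by positivity)
  have habs : |σ12| ≤ Real.sqrt (σ11 * σ22) := by
    apply Real.abs_le_sqrt; nlinarith
  have hle : -1 ≤ -σ12 / Real.sqrt (σ11 * σ22) ∧ -σ12 / Real.sqrt (σ11 * σ22) ≤ 1 := by
    rw [← abs_le, abs_div, abs_neg, abs_of_pos hr, div_le_one hr]; exact habs
  have hcos : Real.cos β = -σ12 / (p1 * p2) := by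
    rw [hβ, Real.cos_arccos hle.1 hle.2, hrr]
  have hsin : Real.sin β = w / (p1 * p2) := by
    rw [hβ, Real.sin_arccos,
      show 1 - (-σ12 / Real.sqrt (σ11 * σ22)) ^ 2 = (σ11 * σ22 - σ12 ^ 2) / (σ11 * σ22) by
        rw [div_pow, hsq]; field_simp,
      Real.sqrt_div hdet.le, hrr]
  have hp1c0 : (p1 : ℂ) ≠ 0 := by
    exact_mod_cast ne_of_gt (Real.sqrt_pos.mpr h11)
  have hp2c0 : (p2 : ℂ) ≠ 0 := by
    exact_mod_cast ne_of_gt (Real.sqrt_pos.mpr h22)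
  have hDc0 : ((σ11 : ℂ) * σ22 - (σ12 : ℂ) ^ 2) ≠ 0 := by
    have h : ((σ11 * σ22 - σ12 ^ 2 : ℝ) : ℂ) ≠ 0 := by exact_mod_cast hD0
    push_cast at h; exact h
  -- exp values
  have he1 : Complex.exp ((β : ℂ) * Complex.I) =
      (-(σ12 : ℂ) + (w : ℂ) * Complex.I) / ((p1 : ℂ) * (p2 : ℂ)) := by
    rw [Complex.exp_mul_I, ← Complex.ofReal_cos, ← Complex.ofReal_sin, hcos, hsin]
    push_cast; ring
  have he2 : Complex.exp (-(β : ℂ) * Complex.I) =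
      (-(σ12 : ℂ) - (w : ℂ) * Complex.I) / ((p1 : ℂ) * (p2 : ℂ)) := by
    rw [show -(β : ℂ) * Complex.I = ((-β : ℝ) : ℂ) * Complex.I by push_cast; ring,
      Complex.exp_mul_I, ← Complex.ofReal_cos, ← Complex.ofReal_sin,
      Real.cos_neg, Real.sin_neg, hcos, hsin]
    push_cast; ring
  have hE1 : (p1 : ℂ) * (p2 : ℂ) * Complex.exp ((β : ℂ) * Complex.I) =
      -(σ12 : ℂ) + (w : ℂ) * Complex.I := by
    rw [he1]; field_simp
  have hE2 : (p1 : ℂ) * (p2 : ℂ) * Complex.exp (-(β : ℂ) * Complex.I) =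
      -(σ12 : ℂ) - (w : ℂ) * Complex.I := by
    rw [he2]; field_simp
  -- values of a,b,c,d (real)
  have haR : (σ11 * σ22 - σ12 ^ 2) * ((θ1p + θ1m) / 2) = μ2 * σ12 - μ1 * σ22 := by
    rw [hθ1p, hθ1m]; field_simp; ring
  have hcR : (σ11 * σ22 - σ12 ^ 2) * ((θ2p + θ2m) / 2) = μ1 * σ12 - μ2 * σ11 := by
    rw [hθ2p, hθ2m]; field_simp; ring
  have hsqrt1 : Real.sqrt ((μ2 * σ12 - μ1 * σ22) ^ 2 + μ2 ^ 2 * (σ11 * σ22 - σ12 ^ 2)) =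
      p2 * q := by
    rw [show (μ2 * σ12 - μ1 * σ22) ^ 2 + μ2 ^ 2 * (σ11 * σ22 - σ12 ^ 2) =
        σ22 * (μ1 ^ 2 * σ22 - 2 * μ1 * μ2 * σ12 + μ2 ^ 2 * σ11) by ring,
      Real.sqrt_mul h22.le]
  have hsqrt2 : Real.sqrt ((μ1 * σ12 - μ2 * σ11) ^ 2 + μ1 ^ 2 * (σ11 * σ22 - σ12 ^ 2)) =
      p1 * q := by
    rw [show (μ1 * σ12 - μ2 * σ11) ^ 2 + μ1 ^ 2 * (σ11 * σ22 - σ12 ^ 2) =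
        σ11 * (μ1 ^ 2 * σ22 - 2 * μ1 * μ2 * σ12 + μ2 ^ 2 * σ11) by ring,
      Real.sqrt_mul h11.le]
  have hbR : 2 * (σ11 * σ22 - σ12 ^ 2) * ((θ1p - θ1m) / 4) = p2 * q := by
    rw [hθ1p, hθ1m, hsqrt1]; field_simp; ring
  have hdR : 2 * (σ11 * σ22 - σ12 ^ 2) * ((θ2p - θ2m) / 4) = p1 * q := by
    rw [hθ2p, hθ2m, hsqrt2]; field_simp; ring
  -- complex versions
  have hA : ((σ11 : ℂ) * σ22 - (σ12 : ℂ) ^ 2) * (((θ1p : ℂ) + (θ1m : ℂ)) / 2) =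
      (μ2 : ℂ) * σ12 - (μ1 : ℂ) * σ22 := by
    have h := congrArg (fun x : ℝ => (x : ℂ)) haR; push_cast at h; exact h
  have hCc : ((σ11 : ℂ) * σ22 - (σ12 : ℂ) ^ 2) * (((θ2p : ℂ) + (θ2m : ℂ)) / 2) =
      (μ1 : ℂ) * σ12 - (μ2 : ℂ) * σ11 := by
    have h := congrArg (fun x : ℝ => (x : ℂ)) hcR; push_cast at h; exact h
  have hB : 2 * ((σ11 : ℂ) * σ22 - (σ12 : ℂ) ^ 2) * (((θ1p : ℂ) - (θ1m : ℂ)) / 4) =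
      (p2 : ℂ) * (q : ℂ) := by
    have h := congrArg (fun x : ℝ => (x : ℂ)) hbR; push_cast at h; exact h
  have hDd : 2 * ((σ11 : ℂ) * σ22 - (σ12 : ℂ) ^ 2) * (((θ2p : ℂ) - (θ2m : ℂ)) / 4) =
      (p1 : ℂ) * (q : ℂ) := by
    have h := congrArg (fun x : ℝ => (x : ℂ)) hdR; push_cast at h; exact h
  have hp1c : (p1 : ℂ) ^ 2 = (σ11 : ℂ) := by exact_mod_cast congrArg (fun x : ℝ => (x : ℂ)) hp1
  have hp2c : (p2 : ℂ) ^ 2 = (σ22 : ℂ) := by exact_mod_cast congrArg (fun x : ℝ => (x : ℂ)) hp2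
  have hwc : (w : ℂ) ^ 2 = (σ11 : ℂ) * σ22 - (σ12 : ℂ) ^ 2 := by
    have h := congrArg (fun x : ℝ => (x : ℂ)) hw; push_cast at h; exact h
  have hqc : (q : ℂ) ^ 2 = (μ1 : ℂ) ^ 2 * σ22 - 2 * μ1 * μ2 * σ12 + (μ2 : ℂ) ^ 2 * σ11 := by
    have h := congrArg (fun x : ℝ => (x : ℂ)) hq; push_cast at h; exact h
  have hM0 : (4 : ℂ) * ((σ11 : ℂ) * σ22 - (σ12 : ℂ) ^ 2) ^ 2 * (p1 : ℂ) ^ 2 * (p2 : ℂ) ^ 2 ≠ 0 := by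
    apply mul_ne_zero; apply mul_ne_zero; apply mul_ne_zero
    · norm_num
    · exact pow_ne_zero _ hDc0
    · exact pow_ne_zero _ hp1c0
    · exact pow_ne_zero _ hp2c0
  show (1 / 2) * ((σ11 : ℂ) * _ ^ 2 + 2 * (σ12 : ℂ) * _ * _ + (σ22 : ℂ) * _ ^ 2) +
    (μ1 : ℂ) * _ + (μ2 : ℂ) * _ = 0
  apply key (σ11 : ℂ) (σ12 : ℂ) (σ22 : ℂ) (μ1 : ℂ) (μ2 : ℂ) _ _ _ _ _ _ s hs
  · -- h1
    apply mul_left_cancel₀ hDc0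
    linear_combination (σ11 : ℂ) * hA + (σ12 : ℂ) * hCc
  · -- h2
    apply mul_left_cancel₀ hDc0
    linear_combination (σ12 : ℂ) * hA + (σ22 : ℂ) * hCc
  · -- hC1 (with e2 = exp(-βI))
    apply mul_left_cancel₀ hM0
    linear_combination
      ((σ11 : ℂ) * p1 ^ 2 * p2 ^ 2 *
          (2 * ((σ11 : ℂ) * σ22 - (σ12 : ℂ) ^ 2) * (((θ1p : ℂ) - (θ1m : ℂ)) / 4) + p2 * q) +
        2 * (σ12 : ℂ) * (2 * ((σ11 : ℂ) * σ22 - (σ12 : ℂ) ^ 2) * (((θ2p : ℂ) - (θ2m : ℂ)) / 4)) *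
          p1 ^ 2 * p2 ^ 2 * Complex.exp (-(β : ℂ) * Complex.I)) * hB +
      (2 * (σ12 : ℂ) * (p2 * q) * p1 ^ 2 * p2 ^ 2 * Complex.exp (-(β : ℂ) * Complex.I) +
        (σ22 : ℂ) * (2 * ((σ11 : ℂ) * σ22 - (σ12 : ℂ) ^ 2) * (((θ2p : ℂ) - (θ2m : ℂ)) / 4) + p1 * q) *
          p1 ^ 2 * p2 ^ 2 * Complex.exp (-(β : ℂ) * Complex.I) ^ 2) * hDd +
      (2 * (σ12 : ℂ) * p1 ^ 2 * p2 ^ 2 * q ^ 2 +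
        (σ22 : ℂ) * p1 ^ 2 * q ^ 2 *
          (p1 * p2 * Complex.exp (-(β : ℂ) * Complex.I) + (-(σ12 : ℂ) - w * Complex.I))) * hE2 +
      ((σ22 : ℂ) * p1 ^ 2 * q ^ 2 * w ^ 2) * Complex.I_sq +
      (-(σ22 : ℂ) * p1 ^ 2 * q ^ 2) * hwc +
      (p1 ^ 2 * q ^ 2 * ((σ11 : ℂ) * (p2 ^ 2 + σ22) - 2 * σ12 ^ 2 - 2 * σ12 * w * Complex.I)) * hp2c
  · -- hC2 (with e1 = exp(βI))
    apply mul_left_cancel₀ hM0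
    linear_combination
      ((σ11 : ℂ) * p1 ^ 2 * p2 ^ 2 *
          (2 * ((σ11 : ℂ) * σ22 - (σ12 : ℂ) ^ 2) * (((θ1p : ℂ) - (θ1m : ℂ)) / 4) + p2 * q) +
        2 * (σ12 : ℂ) * (2 * ((σ11 : ℂ) * σ22 - (σ12 : ℂ) ^ 2) * (((θ2p : ℂ) - (θ2m : ℂ)) / 4)) *
          p1 ^ 2 * p2 ^ 2 * Complex.exp ((β : ℂ) * Complex.I)) * hB +
      (2 * (σ12 : ℂ) * (p2 * q) * p1 ^ 2 * p2 ^ 2 * Complex.exp ((β : ℂ) * Complex.I) +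
        (σ22 : ℂ) * (2 * ((σ11 : ℂ) * σ22 - (σ12 : ℂ) ^ 2) * (((θ2p : ℂ) - (θ2m : ℂ)) / 4) + p1 * q) *
          p1 ^ 2 * p2 ^ 2 * Complex.exp ((β : ℂ) * Complex.I) ^ 2) * hDd +
      (2 * (σ12 : ℂ) * p1 ^ 2 * p2 ^ 2 * q ^ 2 +
        (σ22 : ℂ) * p1 ^ 2 * q ^ 2 *
          (p1 * p2 * Complex.exp ((β : ℂ) * Complex.I) + (-(σ12 : ℂ) + w * Complex.I))) * hE1 +
      ((σ22 : ℂ) * p1 ^ 2 * q ^ 2 * w ^ 2) * Complex.I_sq +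
      (-(σ22 : ℂ) * p1 ^ 2 * q ^ 2) * hwc +
      (p1 ^ 2 * q ^ 2 * ((σ11 : ℂ) * (p2 ^ 2 + σ22) - 2 * σ12 ^ 2 + 2 * σ12 * w * Complex.I)) * hp2c
  · -- h4
    apply mul_left_cancel₀ hM0
    linear_combination
      (4 * p1 ^ 2 * p2 ^ 2 *
          ((σ11 : ℂ) * (((σ11 : ℂ) * σ22 - (σ12 : ℂ) ^ 2) * (((θ1p : ℂ) + (θ1m : ℂ)) / 2) +
              ((μ2 : ℂ) * σ12 - (μ1 : ℂ) * σ22)) +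
            2 * (σ12 : ℂ) * (((σ11 : ℂ) * σ22 - (σ12 : ℂ) ^ 2) * (((θ2p : ℂ) + (θ2m : ℂ)) / 2)) +
            2 * (μ1 : ℂ) * ((σ11 : ℂ) * σ22 - (σ12 : ℂ) ^ 2))) * hA +
      (4 * p1 ^ 2 * p2 ^ 2 *
          (2 * (σ12 : ℂ) * ((μ2 : ℂ) * σ12 - (μ1 : ℂ) * σ22) +
            (σ22 : ℂ) * (((σ11 : ℂ) * σ22 - (σ12 : ℂ) ^ 2) * (((θ2p : ℂ) + (θ2m : ℂ)) / 2) +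
              ((μ1 : ℂ) * σ12 - (μ2 : ℂ) * σ11)) +
            2 * (μ2 : ℂ) * ((σ11 : ℂ) * σ22 - (σ12 : ℂ) ^ 2))) * hCc +
      (2 * (σ11 : ℂ) * p1 ^ 2 * p2 ^ 2 *
          (2 * ((σ11 : ℂ) * σ22 - (σ12 : ℂ) ^ 2) * (((θ1p : ℂ) - (θ1m : ℂ)) / 4) + p2 * q) +
        2 * (σ12 : ℂ) * (2 * ((σ11 : ℂ) * σ22 - (σ12 : ℂ) ^ 2) * (((θ2p : ℂ) - (θ2m : ℂ)) / 4)) *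
          p1 ^ 2 * p2 ^ 2 *
          (Complex.exp ((β : ℂ) * Complex.I) + Complex.exp (-(β : ℂ) * Complex.I))) * hB +
      (2 * (σ12 : ℂ) * (p2 * q) * p1 ^ 2 * p2 ^ 2 *
          (Complex.exp ((β : ℂ) * Complex.I) + Complex.exp (-(β : ℂ) * Complex.I)) +
        2 * (σ22 : ℂ) *
          (2 * ((σ11 : ℂ) * σ22 - (σ12 : ℂ) ^ 2) * (((θ2p : ℂ) - (θ2m : ℂ)) / 4) + p1 * q) *
          p1 ^ 2 * p2 ^ 2 * Complex.exp ((β : ℂ) * Complex.I) *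
          Complex.exp (-(β : ℂ) * Complex.I)) * hDd +
      (2 * (σ12 : ℂ) * p1 ^ 2 * p2 ^ 2 * q ^ 2 +
        2 * (σ22 : ℂ) * p1 ^ 2 * q ^ 2 * (p1 * p2 * Complex.exp (-(β : ℂ) * Complex.I))) * hE1 +
      (2 * (σ12 : ℂ) * p1 ^ 2 * p2 ^ 2 * q ^ 2 +
        2 * (σ22 : ℂ) * p1 ^ 2 * q ^ 2 * (-(σ12 : ℂ) + w * Complex.I)) * hE2 +
      (-2 * (σ22 : ℂ) * p1 ^ 2 * q ^ 2 * w ^ 2) * Complex.I_sq +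
      (2 * (σ22 : ℂ) * p1 ^ 2 * q ^ 2) * hwc +
      (p1 ^ 2 * (-4 * ((σ11 : ℂ) * σ22 - (σ12 : ℂ) ^ 2) *
            ((μ1 : ℂ) ^ 2 * σ22 - 2 * μ1 * μ2 * σ12 + (μ2 : ℂ) ^ 2 * σ11) +
          2 * (σ11 : ℂ) * (p2 ^ 2 + σ22) * q ^ 2 - 4 * (σ12 : ℂ) ^ 2 * q ^ 2)) * hp2c +
      (4 * p1 ^ 2 * (σ22 : ℂ) * ((σ11 : ℂ) * σ22 - (σ12 : ℂ) ^ 2)) * hqc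
end

section
/- The uniformization maps the unit circle onto the real points of the kernel's zero set: for every complex s with |s| = 1, θ₁(s) and θ₂(s) are real, and conversely every real pair (θ₁, θ₂) with γ(θ₁, θ₂) = 0 equals (θ₁(s), θ₂(s)) for some s with |s| = 1. Moreover the branch points satisfy θ₁(1) = θ₁⁺, θ₁(−1) = θ₁⁻, θ₂(e^{iβ}) = θ₂⁺ and θ₂(−e^{iβ}) = θ₂⁻. -/
/-- The uniformization `θ₁(s)`. -/
noncomputable def unif1 (θ1p θ1m : ℝ) (s : ℂ) : ℂ :=
  ((θ1p : ℂ) + (θ1m : ℂ)) / 2 + ((θ1p : ℂ) - (θ1m : ℂ)) / 4 * (s + 1 / s)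

/-- The uniformization `θ₂(s)`. -/
noncomputable def unif2 (θ2p θ2m β : ℝ) (s : ℂ) : ℂ :=
  ((θ2p : ℂ) + (θ2m : ℂ)) / 2 + ((θ2p : ℂ) - (θ2m : ℂ)) / 4 *
    (s * Complex.exp (-(β : ℂ) * Complex.I) + Complex.exp ((β : ℂ) * Complex.I) / s)

theorem gam_ofReal (σ11 σ12 σ22 μ1 μ2 t1 t2 : ℝ) :
    gam σ11 σ12 σ22 μ1 μ2 t1 t2 =
      ((1 / 2 * (σ11 * t1 ^ 2 + 2 * σ12 * t1 * t2 + σ22 * t2 ^ 2) + μ1 * t1 + μ2 * t2 : ℝ) :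
        ℂ) := by
  rw [gam]; push_cast; ring

section
open Real

theorem exists_cos_eq_and_cos_sub_eq {β x y : ℝ} (hβ : sin β ≠ 0)
    (h : x ^ 2 - 2 * x * y * cos β + y ^ 2 = sin β ^ 2) :
    ∃ φ : ℝ, cos φ = x ∧ cos (φ - β) = y := by
  set w := (y - x * cos β) / sin β
  have hw : ‖(⟨x, w⟩ : ℂ)‖ = 1 := by
    rw [Complex.norm_def, sqrt_eq_one, Complex.normSq_mk]
    simp only [w]
    field_simp
    linear_combination h + x ^ 2 * sin_sq_add_cos_sq β
  obtain ⟨φ, hφ⟩ := (Complex.norm_eq_one_iff _).1 hw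
  have hcos : cos φ = x := by rw [← Complex.exp_ofReal_mul_I_re, hφ]
  have hsin : sin φ = w := by rw [← Complex.exp_ofReal_mul_I_im, hφ]
  refine ⟨φ, hcos, ?_⟩
  rw [cos_sub, hcos, hsin, div_mul_cancel₀ _ hβ]
  ring

theorem exists_angle_of_gam_eq_zero {σ11 σ12 σ22 μ1 μ2 t1 t2 : ℝ}
    (h11 : 0 < σ11) (h22 : 0 < σ22) (hdet : 0 < σ11 * σ22 - σ12 ^ 2) (hμ2 : μ2 ≠ 0)
    (h : gam σ11 σ12 σ22 μ1 μ2 t1 t2 = 0) :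
    ∃ φ : ℝ,
      (σ11 * σ22 - σ12 ^ 2) * t1 - (μ2 * σ12 - μ1 * σ22) =
        √((μ2 * σ12 - μ1 * σ22) ^ 2 + μ2 ^ 2 * (σ11 * σ22 - σ12 ^ 2)) * cos φ ∧
      (σ11 * σ22 - σ12 ^ 2) * t2 - (μ1 * σ12 - μ2 * σ11) =
        √((μ1 * σ12 - μ2 * σ11) ^ 2 + μ1 ^ 2 * (σ11 * σ22 - σ12 ^ 2)) *
          cos (φ - arccos (-σ12 / √(σ11 * σ22))) := by
  rw [gam_ofReal, Complex.ofReal_eq_zero] at h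
  set D := σ11 * σ22 - σ12 ^ 2
  set u := D * t1 - (μ2 * σ12 - μ1 * σ22)
  set v := D * t2 - (μ1 * σ12 - μ2 * σ11)
  set Q := σ11 * μ2 ^ 2 - 2 * σ12 * μ1 * μ2 + σ22 * μ1 ^ 2
  have hQ : 0 < Q := by
    have hσQ : σ22 * Q = (σ22 * μ1 - σ12 * μ2) ^ 2 + D * μ2 ^ 2 := by ring
    exact pos_of_mul_pos_right (hσQ ▸ by positivity) h22.le
  have hR1 : √((μ2 * σ12 - μ1 * σ22) ^ 2 + μ2 ^ 2 * D) = √σ22 * √Q := by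
    rw [← sqrt_mul h22.le]; congr 1; simp only [D, Q]; ring
  have hR2 : √((μ1 * σ12 - μ2 * σ11) ^ 2 + μ1 ^ 2 * D) = √σ11 * √Q := by
    rw [← sqrt_mul h11.le]; congr 1; simp only [D, Q]; ring
  rw [hR1, hR2, sqrt_mul h11.le]
  set k := -σ12 / (√σ11 * √σ22)
  have hk : k ^ 2 < 1 := by
    rw [div_pow, mul_pow, sq_sqrt h11.le, sq_sqrt h22.le, div_lt_one (by positivity)]
    linarith
  have hcos : cos (arccos k) = k := cos_arccos (by nlinarith) (by nlinarith)
  have hsin : sin (arccos k) ≠ 0 := by rw [sin_arccos]; exact (sqrt_pos.2 (by linarith)).ne'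
  have hconic : σ11 * u ^ 2 + 2 * σ12 * u * v + σ22 * v ^ 2 = D * Q := by
    linear_combination (2 * D ^ 2) * h
  have hellipse : (u / (√σ22 * √Q)) ^ 2 - 2 * (u / (√σ22 * √Q)) * (v / (√σ11 * √Q)) *
      cos (arccos k) + (v / (√σ11 * √Q)) ^ 2 = sin (arccos k) ^ 2 := by
    rw [sin_sq, hcos]
    simp only [k]
    field_simp
    rw [sq_sqrt h11.le, sq_sqrt h22.le, sq_sqrt hQ.le]
    linear_combination hconic
  obtain ⟨φ, h1, h2⟩ := exists_cos_eq_and_cos_sub_eq hsin hellipse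
  refine ⟨φ, ?_, ?_⟩
  · rw [h1]; field_simp
  · rw [h2]; field_simp

end

section
open Complex

theorem unif1_eq_ofReal {p m : ℝ} {s : ℂ} (hs : ‖s‖ = 1) :
    unif1 p m s = ((p + m) / 2 + (p - m) / 2 * s.re : ℝ) := by
  rw [unif1, one_div, inv_eq_conj hs, add_conj]
  push_cast
  ring

theorem unif1_exp_mul_I_eq {a r D t φ : ℝ} (hD : D ≠ 0) (h : D * t - a = r * Real.cos φ) :
    unif1 ((a + r) / D) ((a - r) / D) (exp (φ * I)) = t := by
  rw [unif1_eq_ofReal (norm_exp_ofReal_mul_I φ), exp_ofReal_mul_I_re, ofReal_inj]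
  calc _ = (a + r * Real.cos φ) / D := by ring
    _ = t := by rw [div_eq_iff hD]; linarith

theorem unif1_one (p m : ℝ) : unif1 p m 1 = p := by
  rw [unif1]; ring

theorem unif1_neg_one (p m : ℝ) : unif1 p m (-1) = m := by
  rw [unif1]; ring

theorem unif2_eq_unif1 (p m β : ℝ) (s : ℂ) : unif2 p m β s = unif1 p m (s / exp (β * I)) := by
  rw [unif2, unif1, neg_mul, exp_neg]
  field_simp

end

theorem stmt4_general (σ11 σ12 σ22 μ1 μ2 : ℝ)
    (h11 : 0 < σ11) (h22 : 0 < σ22) (hdet : 0 < σ11 * σ22 - σ12 ^ 2)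
    (hμ2 : μ2 < 0)
    (θ1p θ1m θ2p θ2m β : ℝ)
    (hθ1p : θ1p = ((μ2 * σ12 - μ1 * σ22) +
      Real.sqrt ((μ2 * σ12 - μ1 * σ22) ^ 2 + μ2 ^ 2 * (σ11 * σ22 - σ12 ^ 2))) /
      (σ11 * σ22 - σ12 ^ 2))
    (hθ1m : θ1m = ((μ2 * σ12 - μ1 * σ22) -
      Real.sqrt ((μ2 * σ12 - μ1 * σ22) ^ 2 + μ2 ^ 2 * (σ11 * σ22 - σ12 ^ 2))) /
      (σ11 * σ22 - σ12 ^ 2))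
    (hθ2p : θ2p = ((μ1 * σ12 - μ2 * σ11) +
      Real.sqrt ((μ1 * σ12 - μ2 * σ11) ^ 2 + μ1 ^ 2 * (σ11 * σ22 - σ12 ^ 2))) /
      (σ11 * σ22 - σ12 ^ 2))
    (hθ2m : θ2m = ((μ1 * σ12 - μ2 * σ11) -
      Real.sqrt ((μ1 * σ12 - μ2 * σ11) ^ 2 + μ1 ^ 2 * (σ11 * σ22 - σ12 ^ 2))) /
      (σ11 * σ22 - σ12 ^ 2))
    (hβ : β = Real.arccos (-σ12 / Real.sqrt (σ11 * σ22))) :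
    (∀ s : ℂ, ‖s‖ = 1 →
      (unif1 θ1p θ1m s).im = 0 ∧ (unif2 θ2p θ2m β s).im = 0) ∧
    (∀ t1 t2 : ℝ, gam σ11 σ12 σ22 μ1 μ2 (t1 : ℂ) (t2 : ℂ) = 0 →
      ∃ s : ℂ, ‖s‖ = 1 ∧
        unif1 θ1p θ1m s = (t1 : ℂ) ∧ unif2 θ2p θ2m β s = (t2 : ℂ)) ∧
    unif1 θ1p θ1m 1 = (θ1p : ℂ) ∧
    unif1 θ1p θ1m (-1) = (θ1m : ℂ) ∧
    unif2 θ2p θ2m β (Complex.exp ((β : ℂ) * Complex.I)) = (θ2p : ℂ) ∧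
    unif2 θ2p θ2m β (-Complex.exp ((β : ℂ) * Complex.I)) = (θ2m : ℂ) := by
  have hexp := Complex.exp_ne_zero (β * Complex.I)
  refine ⟨fun s hs => ⟨?_, ?_⟩, fun t1 t2 h => ?_, unif1_one _ _, unif1_neg_one _ _, ?_, ?_⟩
  · rw [unif1_eq_ofReal hs, Complex.ofReal_im]
  · have hs' : ‖s / Complex.exp (β * Complex.I)‖ = 1 := by
      rw [norm_div, hs, Complex.norm_exp_ofReal_mul_I, div_one]
    rw [unif2_eq_unif1, unif1_eq_ofReal hs', Complex.ofReal_im]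
  · obtain ⟨φ, h1, h2⟩ := exists_angle_of_gam_eq_zero h11 h22 hdet hμ2.ne h
    refine ⟨Complex.exp (φ * Complex.I), Complex.norm_exp_ofReal_mul_I φ, ?_, ?_⟩
    · rw [hθ1p, hθ1m]
      exact unif1_exp_mul_I_eq hdet.ne' h1
    · rw [unif2_eq_unif1, ← Complex.exp_sub, ← sub_mul, ← Complex.ofReal_sub, hθ2p, hθ2m]
      exact unif1_exp_mul_I_eq hdet.ne' (hβ ▸ h2)
  · rw [unif2_eq_unif1, div_self hexp, unif1_one]
  · rw [unif2_eq_unif1, neg_div, div_self hexp, unif1_neg_one]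

/-- The uniformization maps the unit circle onto the real points of the zero set of the
kernel, and the branch points satisfy `θ₁(1) = θ₁⁺`, `θ₁(−1) = θ₁⁻`, `θ₂(e^{iβ}) = θ₂⁺`,
`θ₂(−e^{iβ}) = θ₂⁻`. -/
theorem stmt4 (σ11 σ12 σ22 μ1 μ2 : ℝ)
    (h11 : 0 < σ11) (h22 : 0 < σ22) (hdet : 0 < σ11 * σ22 - σ12 ^ 2)
    (hμ1 : μ1 < 0) (hμ2 : μ2 < 0)
    (θ1p θ1m θ2p θ2m β : ℝ)
    (hθ1p : θ1p = ((μ2 * σ12 - μ1 * σ22) +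
      Real.sqrt ((μ2 * σ12 - μ1 * σ22) ^ 2 + μ2 ^ 2 * (σ11 * σ22 - σ12 ^ 2))) /
      (σ11 * σ22 - σ12 ^ 2))
    (hθ1m : θ1m = ((μ2 * σ12 - μ1 * σ22) -
      Real.sqrt ((μ2 * σ12 - μ1 * σ22) ^ 2 + μ2 ^ 2 * (σ11 * σ22 - σ12 ^ 2))) /
      (σ11 * σ22 - σ12 ^ 2))
    (hθ2p : θ2p = ((μ1 * σ12 - μ2 * σ11) +
      Real.sqrt ((μ1 * σ12 - μ2 * σ11) ^ 2 + μ1 ^ 2 * (σ11 * σ22 - σ12 ^ 2))) /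
      (σ11 * σ22 - σ12 ^ 2))
    (hθ2m : θ2m = ((μ1 * σ12 - μ2 * σ11) -
      Real.sqrt ((μ1 * σ12 - μ2 * σ11) ^ 2 + μ1 ^ 2 * (σ11 * σ22 - σ12 ^ 2))) /
      (σ11 * σ22 - σ12 ^ 2))
    (hβ : β = Real.arccos (-σ12 / Real.sqrt (σ11 * σ22))) :
    (∀ s : ℂ, ‖s‖ = 1 →
      (unif1 θ1p θ1m s).im = 0 ∧ (unif2 θ2p θ2m β s).im = 0) ∧
    (∀ t1 t2 : ℝ, gam σ11 σ12 σ22 μ1 μ2 (t1 : ℂ) (t2 : ℂ) = 0 →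
      ∃ s : ℂ, ‖s‖ = 1 ∧
        unif1 θ1p θ1m s = (t1 : ℂ) ∧ unif2 θ2p θ2m β s = (t2 : ℂ)) ∧
    unif1 θ1p θ1m 1 = (θ1p : ℂ) ∧
    unif1 θ1p θ1m (-1) = (θ1m : ℂ) ∧
    unif2 θ2p θ2m β (Complex.exp ((β : ℂ) * Complex.I)) = (θ2p : ℂ) ∧
    unif2 θ2p θ2m β (-Complex.exp ((β : ℂ) * Complex.I)) = (θ2m : ℂ) :=
  stmt4_general σ11 σ12 σ22 μ1 μ2 h11 h22 hdet hμ2 θ1p θ1m θ2p θ2m β hθ1p hθ1m hθ2p hθ2m hβ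
end

section
/- For every real a ≥ 0 there exists a unique analytic function T_a on the cut plane ℂ∖(−∞,−1] such that T_a(x) = cos(a·arccos x) for all real x ∈ (−1, 1]. -/
/-- The cut plane `ℂ ∖ (−∞, −1]`. -/
def cutC : Set ℂ := {z : ℂ | z.im = 0 ∧ z.re ≤ -1}ᶜ

/-- `T` is an analytic function on the cut plane `ℂ ∖ (−∞, −1]` agreeing with
`x ↦ cos (a · arccos x)` on `(−1, 1]`. -/
def IsChebyshev (a : ℝ) (T : ℂ → ℂ) : Prop :=
  (∀ z ∈ cutC, DifferentiableAt ℂ T z) ∧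
  ∀ x : ℝ, x ∈ Set.Ioc (-1 : ℝ) 1 → T (x : ℂ) = ((Real.cos (a * Real.arccos x) : ℝ) : ℂ)

/-! Writing `x = cos θ` and `w = e^{iθ}`, one has `x = (w + w⁻¹) / 2` and
`cos (aθ) = cosh (a log w)`, so the candidate is `cosh (a log (z + s))` with `s² = z² - 1`.
Its value does not depend on the square root `s`: the two choices give `w` and `w⁻¹`.
The branches `s = i √(1 - z²)` and `s = √(z² - 1)` are analytic on pieces covering the cut
plane minus `z = 1`, where the function is continuous, hence analytic by the removable
singularity theorem. Uniqueness is the identity theorem on the connected cut plane. -/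

open Complex Set Filter Topology

lemma mem_cutC_iff {z : ℂ} : z ∈ cutC ↔ z + 1 ∈ slitPlane := by
  rw [mem_slitPlane_iff]
  simp only [cutC, mem_compl_iff, mem_ofPred_eq, not_and, not_le, add_re, one_re, add_im, one_im,
    add_zero]
  grind

lemma cutC_eq_preimage : cutC = (Homeomorph.addRight (1 : ℂ)) ⁻¹' slitPlane :=
  Set.ext fun _ ↦ mem_cutC_iff

lemma isOpen_cutC : IsOpen cutC := by
  rw [cutC_eq_preimage]
  exact isOpen_slitPlane.preimage (Homeomorph.addRight _).continuous

lemma isPreconnected_cutC : IsPreconnected cutC := by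
  rw [cutC_eq_preimage, Homeomorph.isPreconnected_preimage]
  exact (starConvex_one_slitPlane.isPathConnected one_mem_slitPlane).isConnected.isPreconnected

lemma Complex.sq_sqrt (z : ℂ) : sqrt z ^ 2 = z := by
  simpa only [sqrt, Nat.cast_ofNat] using cpow_nat_inv_pow z two_ne_zero

/-- `z = (w + w⁻¹) / 2` for `w = z + s`, and this Joukowski map sends the negative reals
into `(-∞, -1]`. -/
lemma add_mem_slitPlane_of_sq_eq {z s : ℂ} (hz : z ∈ cutC) (hs : s ^ 2 = z ^ 2 - 1) :
    z + s ∈ slitPlane := by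
  set w := z + s
  by_contra hw
  obtain ⟨hre, him⟩ : w.re ≤ 0 ∧ w.im = 0 := by simpa [mem_slitPlane_iff] using hw
  have hjouk : w ^ 2 + 1 = 2 * w * z := by linear_combination hs
  have hjouk_re := congrArg re hjouk
  have hjouk_im := congrArg im hjouk
  simp only [sq, mul_re, mul_im, add_re, add_im, one_re, one_im, him, re_ofNat, im_ofNat,
    mul_zero, zero_mul, sub_zero, add_zero] at hjouk_re hjouk_im
  have hw0 : w.re ≠ 0 := by intro h; simp [h] at hjouk_re
  exact hz ⟨by simpa [hw0] using hjouk_im,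
    by nlinarith [sq_nonneg (w.re + 1), lt_of_le_of_ne hre hw0]⟩

lemma cosh_mul_log_add_eq_of_sq_eq (a : ℂ) {z s t : ℂ} (hz : z ∈ cutC)
    (hs : s ^ 2 = z ^ 2 - 1) (ht : t ^ 2 = z ^ 2 - 1) :
    cosh (a * log (z + s)) = cosh (a * log (z + t)) := by
  have hw := add_mem_slitPlane_of_sq_eq hz hs
  rcases sq_eq_sq_iff_eq_or_eq_neg.mp (ht.trans hs.symm) with rfl | rfl
  · rfl
  have hinv : z + -s = (z + s)⁻¹ := by
    apply eq_inv_of_mul_eq_one_left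
    linear_combination -hs
  rw [hinv, log_inv _ (slitPlane_arg_ne_pi hw), mul_neg, cosh_neg]

lemma differentiableAt_cosh_mul_log_add (a : ℂ) {f : ℂ → ℂ} {z : ℂ} (hz : z ∈ cutC)
    (hf : DifferentiableAt ℂ f z) (hsq : f z ^ 2 = z ^ 2 - 1) :
    DifferentiableAt ℂ (fun z ↦ cosh (a * log (z + f z))) z :=
  (((differentiableAt_id.add hf).clog (add_mem_slitPlane_of_sq_eq hz hsq)).const_mul a).ccosh

noncomputable def chebyshevT (a z : ℂ) : ℂ := cosh (a * log (z + I * sqrt (1 - z ^ 2)))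

lemma sq_I_mul_sqrt_one_sub_sq (z : ℂ) : (I * sqrt (1 - z ^ 2)) ^ 2 = z ^ 2 - 1 := by
  rw [mul_pow, I_sq, sq_sqrt]; ring

lemma chebyshevT_eq_cosh_mul_log_add_sqrt (a : ℂ) {z : ℂ} (hz : z ∈ cutC) :
    chebyshevT a z = cosh (a * log (z + sqrt (z ^ 2 - 1))) :=
  cosh_mul_log_add_eq_of_sq_eq a hz (sq_I_mul_sqrt_one_sub_sq z) (sq_sqrt _)

lemma differentiableAt_chebyshevT (a : ℂ) {z : ℂ} (hz : z ∈ cutC) (hz1 : z ≠ 1) :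
    DifferentiableAt ℂ (chebyshevT a) z := by
  have hz_neg_one : z ≠ -1 := by rintro rfl; simp [cutC] at hz
  have hne : z ^ 2 - 1 ≠ 0 := by
    rw [sub_ne_zero, ne_eq, sq_eq_one_iff, not_or]
    exact ⟨hz1, hz_neg_one⟩
  rcases mem_slitPlane_or_neg_mem_slitPlane hne with h | h
  · have heq : (fun z ↦ cosh (a * log (z + sqrt (z ^ 2 - 1)))) =ᶠ[𝓝 z] chebyshevT a := by
      filter_upwards [isOpen_cutC.mem_nhds hz] with w hw
      exact (chebyshevT_eq_cosh_mul_log_add_sqrt a hw).symm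
    exact (differentiableAt_cosh_mul_log_add a hz (by fun_prop) (sq_sqrt _)).congr_of_eventuallyEq
      heq.symm
  · rw [neg_sub] at h
    exact differentiableAt_cosh_mul_log_add a hz (by fun_prop) (sq_I_mul_sqrt_one_sub_sq z)

lemma continuousAt_chebyshevT_one (a : ℂ) : ContinuousAt (chebyshevT a) 1 := by
  have hsqrt : ContinuousAt (fun z : ℂ ↦ sqrt (1 - z ^ 2)) 1 :=
    (continuousAt_sqrt (by simp)).comp (by fun_prop)
  have hlog : ContinuousAt (fun z ↦ log (z + I * sqrt (1 - z ^ 2))) 1 :=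
    (by fun_prop : ContinuousAt (fun z ↦ z + I * sqrt (1 - z ^ 2)) 1).clog (by simp)
  unfold chebyshevT
  fun_prop

lemma differentiableOn_chebyshevT (a : ℂ) : DifferentiableOn ℂ (chebyshevT a) cutC :=
  (differentiableOn_compl_singleton_and_continuousAt_iff
    (isOpen_cutC.mem_nhds (by simp [cutC]))).mp
    ⟨fun _ hz ↦ (differentiableAt_chebyshevT a hz.1 hz.2).differentiableWithinAt,
      continuousAt_chebyshevT_one a⟩

lemma chebyshevT_ofReal (a : ℂ) {x : ℝ} (hx : x ∈ Icc (-1 : ℝ) 1) :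
    chebyshevT a x = cos (a * Real.arccos x) := by
  set θ := Real.arccos x
  have hsqrt : sqrt (1 - (x : ℂ) ^ 2) = Real.sqrt (1 - x ^ 2) := by
    rw [sqrt_of_nonneg (by norm_cast; nlinarith [hx.1, hx.2])]
    norm_cast
  have hexp : (x : ℂ) + I * Real.sqrt (1 - x ^ 2) = exp (θ * I) := by
    rw [exp_mul_I, ← ofReal_cos, ← ofReal_sin, Real.cos_arccos hx.1 hx.2, Real.sin_arccos]
    ring
  have hlog : log (exp (θ * I)) = θ * I :=
    log_exp (by simpa using (neg_neg_of_pos Real.pi_pos).trans_le (Real.arccos_nonneg x))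
      (by simpa using Real.arccos_le_pi x)
  rw [chebyshevT, hsqrt, hexp, hlog, ← mul_assoc, cosh_mul_I]

lemma eqOn_of_eventuallyEq_ofReal {U : Set ℂ} {f g : ℂ → ℂ} (hU : IsOpen U)
    (hU' : IsPreconnected U) (hf : DifferentiableOn ℂ f U) (hg : DifferentiableOn ℂ g U)
    {x₀ : ℝ} (hx₀ : (x₀ : ℂ) ∈ U) (hfg : ∀ᶠ x : ℝ in 𝓝 x₀, f x = g x) : EqOn f g U := by
  refine (hf.analyticOnNhd hU).eqOn_of_preconnected_of_frequently_eq (hg.analyticOnNhd hU) hU'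
    hx₀ ?_
  have hofReal : Tendsto ((↑) : ℝ → ℂ) (𝓝[≠] x₀) (𝓝[≠] (x₀ : ℂ)) :=
    continuous_ofReal.continuousWithinAt.tendsto_nhdsWithin fun _ ↦ ofReal_injective.ne
  exact hofReal.frequently (hfg.filter_mono nhdsWithin_le_nhds).frequently

lemma isChebyshev_chebyshevT (a : ℝ) : IsChebyshev a (chebyshevT a) := by
  refine ⟨fun z hz ↦ (differentiableOn_chebyshevT a).differentiableAt (isOpen_cutC.mem_nhds hz),
    fun x hx ↦ ?_⟩
  rw [chebyshevT_ofReal a (Ioc_subset_Icc_self hx)]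
  push_cast
  rfl

lemma IsChebyshev.differentiableOn {a : ℝ} {T : ℂ → ℂ} (hT : IsChebyshev a T) :
    DifferentiableOn ℂ T cutC :=
  fun z hz ↦ (hT.1 z hz).differentiableWithinAt

lemma IsChebyshev.eqOn {a : ℝ} {T T' : ℂ → ℂ} (hT : IsChebyshev a T) (hT' : IsChebyshev a T') :
    EqOn T T' cutC := by
  refine eqOn_of_eventuallyEq_ofReal isOpen_cutC isPreconnected_cutC hT.differentiableOn
    hT'.differentiableOn (x₀ := 0) (by simp [cutC]) ?_
  filter_upwards [Ioc_mem_nhds (by norm_num : (-1 : ℝ) < 0) one_pos] with x hx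
  rw [hT.2 x hx, hT'.2 x hx]

theorem stmt5_general (a : ℝ) :
    (∃ T : ℂ → ℂ, IsChebyshev a T) ∧
    ∀ T T' : ℂ → ℂ, IsChebyshev a T → IsChebyshev a T' → Set.EqOn T T' cutC :=
  ⟨⟨chebyshevT a, isChebyshev_chebyshevT a⟩, fun _ _ hT hT' ↦ hT.eqOn hT'⟩

/-- For every `a ≥ 0` there is a unique analytic function on `ℂ ∖ (−∞,−1]` agreeing
with `x ↦ cos (a · arccos x)` on `(−1, 1]`. -/
theorem stmt5 (a : ℝ) (ha : 0 ≤ a) :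
    (∃ T : ℂ → ℂ, IsChebyshev a T) ∧
    ∀ T T' : ℂ → ℂ, IsChebyshev a T → IsChebyshev a T' → Set.EqOn T T' cutC :=
  stmt5_general a
end

section
/- If a ≥ 0 is rational, then the function x ↦ cos(a·arccos x) is algebraic: there exists a nonzero polynomial P in two variables with real coefficients such that P(x, cos(a·arccos x)) = 0 for all x ∈ [−1, 1]. -/
open Polynomial MvPolynomial

lemma eval_aeval_X (v : Fin 2 → ℝ) (i : Fin 2) (p : Polynomial ℝ) :
    MvPolynomial.eval v (Polynomial.aeval (MvPolynomial.X i : MvPolynomial (Fin 2) ℝ) p)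
      = Polynomial.eval (v i) p := by
  rw [Polynomial.aeval_def, Polynomial.hom_eval₂]
  have : ((MvPolynomial.eval v).comp (MvPolynomial.C : ℝ →+* MvPolynomial (Fin 2) ℝ))
      = RingHom.id ℝ := by ext r; simp
  simp [Polynomial.eval₂_eq_eval_map, this]

/-- If `a ≥ 0` is rational, then `x ↦ cos (a · arccos x)` is an algebraic function
on `[−1, 1]`. -/
theorem stmt7 (a : ℝ) (ha : 0 ≤ a) (hq : ∃ q : ℚ, (q : ℝ) = a) :
    ∃ P : MvPolynomial (Fin 2) ℝ, P ≠ 0 ∧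
      ∀ x ∈ Set.Icc (-1 : ℝ) 1,
        MvPolynomial.eval ![x, Real.cos (a * Real.arccos x)] P = 0 := by
  obtain ⟨q, rfl⟩ := hq
  set n : ℤ := (q.den : ℤ) with hn
  set m : ℤ := q.num with hm
  have hnpos : (0 : ℝ) < (n : ℝ) := by
    exact_mod_cast Nat.cast_pos.mpr q.pos
  have hkey : (n : ℝ) * (q : ℝ) = (m : ℝ) := by
    rw [hn, hm]
    push_cast
    rw [Rat.cast_def]
    field_simp
  refine ⟨Polynomial.aeval (MvPolynomial.X 1) (Polynomial.Chebyshev.T ℝ n)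
      - Polynomial.aeval (MvPolynomial.X 0) (Polynomial.Chebyshev.T ℝ m), ?_, ?_⟩
  · intro h
    have h' : Polynomial.aeval (MvPolynomial.X 1 : MvPolynomial (Fin 2) ℝ)
        (Polynomial.Chebyshev.T ℝ n)
        = Polynomial.aeval (MvPolynomial.X 0 : MvPolynomial (Fin 2) ℝ)
        (Polynomial.Chebyshev.T ℝ m) := by
      rwa [sub_eq_zero] at h
    have h1 := congrArg (MvPolynomial.eval ![0, Real.cos (Real.pi / n)]) h'
    have h2 := congrArg (MvPolynomial.eval ![0, Real.cos 0]) h'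
    rw [eval_aeval_X, eval_aeval_X] at h1 h2
    simp only [Matrix.cons_val_one, Matrix.head_cons, Matrix.cons_val_zero] at h1 h2
    rw [Polynomial.Chebyshev.T_real_cos] at h1 h2
    have e1 : (n : ℝ) * (Real.pi / n) = Real.pi := by field_simp
    rw [e1, Real.cos_pi] at h1
    rw [mul_zero, Real.cos_zero] at h2
    linarith
  · intro x hx
    have hc : Real.cos (Real.arccos x) = x := Real.cos_arccos hx.1 hx.2
    rw [map_sub, eval_aeval_X, eval_aeval_X]
    simp only [Matrix.cons_val_one, Matrix.head_cons, Matrix.cons_val_zero]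
    have hT := Polynomial.Chebyshev.T_real_cos (Real.arccos x) m
    rw [hc] at hT
    rw [Polynomial.Chebyshev.T_real_cos, hT, sub_eq_zero, ← mul_assoc, hkey]
end

section
/- If a > 0 is irrational, then the function x ↦ cos(a·arccos x) is not algebraic: the only polynomial P in two variables with real coefficients satisfying P(x, cos(a·arccos x)) = 0 for all x ∈ [−1, 1] is the zero polynomial. -/
/-!
Substituting `x = cos θ`, the hypothesis says `P(cos θ, cos aθ) = 0` for `θ ∈ [0, π]`,
hence for all real `θ` by analyticity. Replacing `θ` by `θ + 2πm` fixes `cos θ` and shifts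
`aθ` by `2πma`; as `a` is irrational these shifts are dense modulo `2π`, so
`P(cos φ, cos ψ) = 0` for all `φ, ψ`. Thus `P` vanishes on `[-1, 1]²`, and a polynomial
vanishing on a box with infinite sides is zero.
-/

open Real MvPolynomial Set Filter Topology

theorem eval_cos_cos_mul_eq_zero_of_forall_mem_Icc {a : ℝ} {P : MvPolynomial (Fin 2) ℝ}
    (h : ∀ θ ∈ Icc 0 π, eval ![cos θ, cos (a * θ)] P = 0) (θ : ℝ) :
    eval ![cos θ, cos (a * θ)] P = 0 := by
  have hP : AnalyticOnNhd ℝ (fun θ ↦ eval ![cos θ, cos (a * θ)] P) univ := by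
    simp_rw [← coe_aeval_eq_eval]
    refine .aeval_mvPolynomial (fun i ↦ ?_) P
    fin_cases i
    · exact fun _ _ ↦ analyticAt_cos
    · exact fun _ _ ↦ analyticAt_cos.comp (analyticAt_const.mul analyticAt_id)
  have hIcc : Icc 0 π ∈ 𝓝 (π / 2) := Icc_mem_nhds (by positivity) (by linarith [pi_pos])
  refine hP.eqOn_zero_of_preconnected_of_frequently_eq_zero isPreconnected_univ (mem_univ (π / 2))
    ?_ (mem_univ θ)
  exact (eventually_nhdsWithin_of_eventually_nhds (eventually_of_mem hIcc h)).frequently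

theorem eval_cos_cos_eq_zero_of_irrational {a : ℝ} (ha : Irrational a)
    {P : MvPolynomial (Fin 2) ℝ} (h : ∀ θ, eval ![cos θ, cos (a * θ)] P = 0) (φ ψ : ℝ) :
    eval ![cos φ, cos ψ] P = 0 := by
  have hdense : Dense (AddSubgroup.closure {a * (2 * π), 2 * π} : Set ℝ) := by
    rwa [dense_addSubgroupClosure_pair_iff, mul_div_cancel_right₀ _ (by positivity)]
  have hcont : Continuous fun s ↦ eval ![cos φ, cos (a * φ + s)] P :=
    (continuous_eval P).comp (by fun_prop)
  have hzero : EqOn (fun s ↦ eval ![cos φ, cos (a * φ + s)] P) 0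
      (AddSubgroup.closure {a * (2 * π), 2 * π}) := by
    intro s hs
    obtain ⟨m, n, rfl⟩ := AddSubgroup.mem_closure_pair.1 hs
    have hshift :
        a * φ + (m • (a * (2 * π)) + n • (2 * π)) = a * (φ + m * (2 * π)) + n * (2 * π) := by
      simp only [zsmul_eq_mul]; ring
    dsimp only
    rw [Pi.zero_apply, hshift, cos_add_int_mul_two_pi, ← cos_add_int_mul_two_pi φ m]
    exact h _
  have hψ := congrFun (hcont.ext_on hdense continuous_const hzero) (ψ - a * φ)
  rwa [add_sub_cancel] at hψ

theorem stmt8_general (a : ℝ) (hirr : Irrational a) :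
    ∀ P : MvPolynomial (Fin 2) ℝ,
      (∀ x ∈ Set.Icc (-1 : ℝ) 1,
        MvPolynomial.eval ![x, Real.cos (a * Real.arccos x)] P = 0) → P = 0 := by
  intro P hP
  have hIcc : ∀ θ ∈ Icc 0 π, eval ![cos θ, cos (a * θ)] P = 0 := fun θ hθ ↦ by
    simpa [arccos_cos hθ.1 hθ.2] using hP (cos θ) ⟨neg_one_le_cos θ, cos_le_one θ⟩
  have hsq := eval_cos_cos_eq_zero_of_irrational hirr
    (eval_cos_cos_mul_eq_zero_of_forall_mem_Icc hIcc)
  refine funext_set (fun _ ↦ Icc (-1 : ℝ) 1) (fun _ ↦ Icc_infinite (by norm_num))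
    fun x hx ↦ ?_
  have hx' : x = ![cos (arccos (x 0)), cos (arccos (x 1))] := by
    ext i
    fin_cases i <;> simp [cos_arccos (hx _ trivial).1 (hx _ trivial).2]
  rw [hx', hsq, map_zero]

/-- If `a > 0` is irrational, then `x ↦ cos (a · arccos x)` is not algebraic: the only
two-variable real polynomial annihilating it on `[−1, 1]` is the zero polynomial. -/
theorem stmt8 (a : ℝ) (ha : 0 < a) (hirr : Irrational a) :
    ∀ P : MvPolynomial (Fin 2) ℝ,
      (∀ x ∈ Set.Icc (-1 : ℝ) 1,
        MvPolynomial.eval ![x, Real.cos (a * Real.arccos x)] P = 0) → P = 0 :=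
  stmt8_general a hirr
end
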